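/- Let $W_0 = -z_1 z_2 \cdots z_n \in \C[z_1, \ldots, z_n]$. Consider the Koszul-type complex $K(dW_0) = (\C[z_1,\ldots,z_n] \otimes \Lambda^\bullet(\theta_1, \ldots, \theta_n), \iota_{dW_0})$ where $\iota_{dW_0}$ is contraction of the exterior algebra generators against the differential $dW_0 = \sum_i \partial_i W_0 \, dz_i$. Then the kernel of $\iota_{dW_0}$ is contained in the image of the algebra map $f: \C[z_1,\ldots,z_n] \otimes \Lambda^\bullet(u_1,\ldots,u_n) \to \C[z_1,\ldots,z_n] \otimes \Lambda^\bullet(\theta_1,\ldots,\theta_n)$ defined by $f(z_i) = z_i$, $f(u_i) = z_i \theta_i$. -/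

import Mathlib

open ExteriorAlgebra

noncomputable section

set_option synthInstance.maxHeartbeats 1000000
set_option maxHeartbeats 1000000

/-- The coefficient ring `ℂ[z_1,…,z_n]`. -/
abbrev PolyR (n : ℕ) := MvPolynomial (Fin n) ℂ

/-- The algebra `ℂ[z_1,…,z_n][θ_1,…,θ_n]`: the exterior algebra over `ℂ[z]` on `n`
odd generators. -/
abbrev ExtE (n : ℕ) := ExteriorAlgebra (PolyR n) (Fin n → PolyR n)

/-- `W₀ = -z_1 ⋯ z_n`. -/
def Wzero (n : ℕ) : PolyR n := - ∏ i, MvPolynomial.X i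

/-- The dual vector `dW₀`, pairing `θ_i` with `∂_i W₀`. -/
def dWdual (n : ℕ) : Module.Dual (PolyR n) (Fin n → PolyR n) :=
  ∑ i, MvPolynomial.pderiv i (Wzero n) •
    (LinearMap.proj i : (Fin n → PolyR n) →ₗ[PolyR n] PolyR n)

/-- Contraction `ι_{dW₀}` on `ℂ[z][θ]`, the odd derivation with `θ_i ↦ ∂_i W₀`. -/
def iotaDW (n : ℕ) : ExtE n →ₗ[PolyR n] ExtE n :=
  CliffordAlgebra.contractLeft (dWdual n)

/-- The algebra map `f : ℂ[z][u] → ℂ[z][θ]` with `f(z_i) = z_i`, `f(u_i) = z_i θ_i`. -/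
def fMap (n : ℕ) : ExtE n →ₐ[PolyR n] ExtE n :=
  ExteriorAlgebra.lift (PolyR n)
    ⟨(ExteriorAlgebra.ι (PolyR n)).comp
        (LinearMap.pi fun i => (MvPolynomial.X i : PolyR n) •
          (LinearMap.proj i : (Fin n → PolyR n) →ₗ[PolyR n] PolyR n)),
      fun m => ExteriorAlgebra.ι_sq_zero _⟩

/-!
Write `x = ∑_S a_S θ_S` in the monomial basis of the exterior algebra; since `f θ_S = (∏_{i ∈ S} z_i) θ_S`,
`x` lies in the image of `f` as soon as `∏_{i ∈ S} z_i ∣ a_S` for every `S`. If `ι x = 0`, then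
`ι (θ_i x) = ∂_i W₀ · x`. In the image of `ι` every coefficient at an `S ∋ i` is divisible by `z_i`:
contraction against `θ_i^*` never produces `θ_i`, and `z_i ∣ ∂_j W₀` for `j ≠ i`. As `z_i` is prime and
does not divide `∂_i W₀ = -∏_{k ≠ i} z_k`, we get `z_i ∣ a_S` for all `i ∈ S`, and the distinct primes
`z_i` then give `∏_{i ∈ S} z_i ∣ a_S`.
-/

namespace MvPolynomial

variable {σ R : Type*} [CommRing R]

theorem pderiv_prod_X [Nontrivial R] [DecidableEq σ] {i : σ} {S : Finset σ} (hi : i ∈ S) :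
    pderiv i (∏ k ∈ S, X k : MvPolynomial σ R) = ∏ k ∈ S.erase i, X k := by
  have hvars : i ∉ (∏ k ∈ S.erase i, X k : MvPolynomial σ R).vars := fun h => by
    obtain ⟨k, hk, hik⟩ := Finset.mem_biUnion.mp (vars_prod _ h)
    rw [vars_X, Finset.mem_singleton] at hik
    exact Finset.notMem_erase i S (hik ▸ hk)
  rw [← Finset.mul_prod_erase S _ hi, pderiv_mul, pderiv_X_self,
    pderiv_eq_zero_of_notMem_vars hvars]
  ring

variable [IsDomain R]

theorem X_dvd_of_X_dvd_prod_X_mul {i : σ} {S : Finset σ} (hi : i ∉ S) {p : MvPolynomial σ R}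
    (h : X i ∣ (∏ k ∈ S, X k) * p) : X i ∣ p := by
  refine (X_prime.dvd_or_dvd h).resolve_left fun hS => hi ?_
  obtain ⟨k, hk, hik⟩ := (X_prime.dvd_finsetProd_iff _).mp hS
  rwa [X_dvd_X.mp hik]

theorem prod_X_dvd_of_forall_X_dvd {S : Finset σ} {p : MvPolynomial σ R}
    (h : ∀ i ∈ S, X i ∣ p) : ∏ i ∈ S, X i ∣ p := by
  classical
  induction S using Finset.induction_on generalizing p with
  | empty => simp
  | insert i S hiS ih =>
    obtain ⟨q, rfl⟩ := h i (Finset.mem_insert_self i S)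
    rw [Finset.prod_insert hiS]
    refine mul_dvd_mul_left _ (ih fun j hj => X_dvd_of_X_dvd_prod_X_mul (S := {i}) ?_ ?_)
    · simpa using fun hji : j = i => hiS (hji ▸ hj)
    · simpa using h j (Finset.mem_insert_of_mem hj)

end MvPolynomial

namespace ExteriorAlgebra

open Set.powersetCard

variable {R M I : Type*} [CommRing R] [AddCommGroup M] [Module R M] [LinearOrder I]
  (b : Module.Basis I R M)

theorem basis_empty : b.ExteriorAlgebra ∅ = 1 := by
  rw [basis_apply_ofCard b Finset.card_empty]
  simp [ExteriorAlgebra.ιMulti_family]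

theorem basis_singleton (j : I) : b.ExteriorAlgebra {j} = ι R (b j) := by
  rw [basis_apply_ofCard b (Finset.card_singleton j)]
  simp [ExteriorAlgebra.ιMulti_family, ofFinEmbEquiv_symm_apply, ofCard]

theorem exists_basis_insert_eq {j : I} {T : Finset I} (h : j ∉ T) :
    ∃ u : ℤˣ, b.ExteriorAlgebra (insert j T) = u • (ι R (b j) * b.ExteriorAlgebra T) := by
  have hd : Disjoint (ofCard (Finset.card_singleton j)).val (ofCard (s := T) rfl).val := by
    simpa [ofCard] using h
  have hmul := basis_mul_of_disjoint b _ _ hd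
  rw [val_ofCard, val_ofCard, basis_singleton] at hmul
  refine ⟨(permOfDisjoint hd).sign⁻¹, ?_⟩
  rw [hmul, inv_smul_smul]
  congr 1
  simp [coe_disjUnion, ofCard]

variable {b}

theorem algHom_basis_eq_prod_smul (F : ExteriorAlgebra R M →ₐ[R] ExteriorAlgebra R M)
    {c : I → R} (hF : ∀ i, F (ι R (b i)) = c i • ι R (b i)) (S : Finset I) :
    F (b.ExteriorAlgebra S) = (∏ i ∈ S, c i) • b.ExteriorAlgebra S := by
  induction S using Finset.induction_on with
  | empty => simp [basis_empty]
  | insert j T hjT ih =>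
    obtain ⟨u, hu⟩ := exists_basis_insert_eq b hjT
    rw [hu, map_zsmul_unit, map_mul, hF, ih, smul_mul_smul_comm, Finset.prod_insert hjT,
      smul_comm]

theorem contractLeft_coord_basis_of_notMem {i : I} {T : Finset I} (h : i ∉ T) :
    CliffordAlgebra.contractLeft (b.coord i) (b.ExteriorAlgebra T) = 0 := by
  induction T using Finset.induction_on with
  | empty => simp [basis_empty]
  | insert j T hjT ih =>
    obtain ⟨u, hu⟩ := exists_basis_insert_eq b hjT
    have hij : i ≠ j := fun hij => h (hij ▸ Finset.mem_insert_self i T)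
    rw [hu, map_zsmul_unit, CliffordAlgebra.contractLeft_ι_mul,
      ih fun hi => h (Finset.mem_insert_of_mem hi)]
    simp [hij.symm]

theorem exists_contractLeft_coord_basis_of_mem {i : I} {T : Finset I} (h : i ∈ T) :
    ∃ u : ℤˣ, CliffordAlgebra.contractLeft (b.coord i) (b.ExteriorAlgebra T) =
      u • b.ExteriorAlgebra (T.erase i) := by
  obtain ⟨u, hu⟩ := exists_basis_insert_eq b (Finset.notMem_erase i T)
  refine ⟨u, ?_⟩
  rw [← Finset.insert_erase h, hu, map_zsmul_unit, CliffordAlgebra.contractLeft_ι_mul,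
    contractLeft_coord_basis_of_notMem (Finset.notMem_erase i T), Finset.erase_insert_eq_erase]
  simp

theorem repr_contractLeft_coord_of_mem {i : I} {S : Finset I} (h : i ∈ S)
    (x : ExteriorAlgebra R M) :
    b.ExteriorAlgebra.repr (CliffordAlgebra.contractLeft (b.coord i) x) S = 0 := by
  suffices b.ExteriorAlgebra.coord S ∘ₗ
      (CliffordAlgebra.contractLeft (b.coord i) : ExteriorAlgebra R M →ₗ[R] _) = 0 from
    LinearMap.congr_fun this x
  refine b.ExteriorAlgebra.ext fun T => ?_
  by_cases hT : i ∈ T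
  · obtain ⟨u, hu⟩ := exists_contractLeft_coord_basis_of_mem (b := b) hT
    have hne : T.erase i ≠ S := fun he => Finset.notMem_erase i T (he ▸ h)
    simp [hu, hne]
  · simp [contractLeft_coord_basis_of_notMem (b := b) hT]

theorem dvd_repr_contractLeft [Fintype I] {d : Module.Dual R M} {p : R} {i : I}
    (hd : ∀ j ≠ i, p ∣ d (b j)) {S : Finset I} (hS : i ∈ S) (x : ExteriorAlgebra R M) :
    p ∣ b.ExteriorAlgebra.repr (CliffordAlgebra.contractLeft d x) S := by
  rw [← b.sum_dual_apply_smul_coord d]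
  simp only [map_sum, map_smul, LinearMap.sum_apply, LinearMap.smul_apply,
    Finsupp.coe_finsetSum, Finsupp.coe_smul, Finset.sum_apply, Pi.smul_apply, smul_eq_mul]
  refine Finset.dvd_sum fun j _ => ?_
  rcases eq_or_ne j i with rfl | hji
  · simp [repr_contractLeft_coord_of_mem hS]
  · exact (hd j hji).mul_right _

end ExteriorAlgebra

open MvPolynomial in
theorem dWdual_basisFun (n : ℕ) (j : Fin n) :
    dWdual n (Pi.basisFun (PolyR n) (Fin n) j) = -∏ k ∈ Finset.univ.erase j, X k := by
  classical
  simp [dWdual, Wzero, Pi.single_apply, pderiv_prod_X (Finset.mem_univ _)]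

theorem fMap_ι_basisFun (n : ℕ) (i : Fin n) :
    fMap n (ι (PolyR n) (Pi.basisFun (PolyR n) (Fin n) i)) =
      (MvPolynomial.X i : PolyR n) • ι (PolyR n) (Pi.basisFun (PolyR n) (Fin n) i) := by
  rw [fMap, lift_ι_apply, LinearMap.comp_apply, ← map_smul]
  congr 1
  ext k : 1
  rcases eq_or_ne k i with rfl | hki <;> simp [*]

theorem iotaDW_ι_mul_of_iotaDW_eq_zero {n : ℕ} {x : ExtE n} (hx : iotaDW n x = 0)
    (m : Fin n → PolyR n) : iotaDW n (ι (PolyR n) m * x) = dWdual n m • x := by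
  rw [iotaDW, CliffordAlgebra.contractLeft_ι_mul, ← iotaDW, hx, mul_zero, sub_zero]

theorem X_dvd_repr_iotaDW (n : ℕ) {i : Fin n} {S : Finset (Fin n)} (hi : i ∈ S) (y : ExtE n) :
    MvPolynomial.X i ∣ (Pi.basisFun (PolyR n) (Fin n)).ExteriorAlgebra.repr (iotaDW n y) S := by
  refine dvd_repr_contractLeft (fun j hji => ?_) hi y
  rw [dWdual_basisFun, dvd_neg]
  exact Finset.dvd_prod_of_mem _ (Finset.mem_erase.mpr ⟨hji.symm, Finset.mem_univ i⟩)

theorem ker_contract_subset_range_f_general (n : ℕ) (x : ExtE n)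
    (hx : iotaDW n x = 0) : x ∈ (fMap n).range := by
  classical
  set b := Pi.basisFun (PolyR n) (Fin n)
  have hX_dvd : ∀ S, ∀ i ∈ S, MvPolynomial.X i ∣ b.ExteriorAlgebra.repr x S := by
    intro S i hi
    have h := X_dvd_repr_iotaDW n hi (ι _ (b i) * x)
    rw [iotaDW_ι_mul_of_iotaDW_eq_zero hx, map_smul, Finsupp.smul_apply, smul_eq_mul,
      dWdual_basisFun, neg_mul, dvd_neg] at h
    exact MvPolynomial.X_dvd_of_X_dvd_prod_X_mul (Finset.notMem_erase i _) h
  choose c hc using fun S => MvPolynomial.prod_X_dvd_of_forall_X_dvd (hX_dvd S)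
  refine (AlgHom.mem_range _).mpr ⟨∑ S, c S • b.ExteriorAlgebra S, ?_⟩
  conv_rhs => rw [← b.ExteriorAlgebra.sum_repr x]
  refine (map_sum _ _ _).trans (Finset.sum_congr rfl fun S _ => ?_)
  rw [map_smul, algHom_basis_eq_prod_smul _ (fMap_ι_basisFun n) S, smul_smul, hc S, mul_comm]

/-- the kernel of the contraction `ι_{dW₀}` is contained in the image of `f`. -/
theorem ker_contract_subset_range_f (n : ℕ) (hn : 1 ≤ n) (x : ExtE n)
    (hx : iotaDW n x = 0) : x ∈ (fMap n).range :=
  ker_contract_subset_range_f_general n x hx
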